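/- Let (Θ̂, υ̂, ν̂, π̂, τ̂) be a DFact-feasible tuple for (C, s, A, b; F) with objective value ζ̂ := f(Θ̂, ν̂, π̂, τ̂), and let j ∈ {1,…,n}. Then: (i) every CMESP-feasible binary vector x with x_j = 1 satisfies det C[S(x), S(x)] ≤ exp(ζ̂ − υ̂_j); and (ii) every CMESP-feasible binary vector x with x_j = 0 satisfies det C[S(x), S(x)] ≤ exp(ζ̂ − ν̂_j). -/

import Mathlib

open Matrix

/-- The eigenvalues of a real symmetric matrix, sorted in nonincreasing order:
`sortedEigs M 0` is the largest eigenvalue (`λ_1`) and `sortedEigs M (k-1)` the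
smallest (`λ_k`).  For non-Hermitian matrices we return the junk value `0`. -/
noncomputable def sortedEigs {k : ℕ} (M : Matrix (Fin k) (Fin k) ℝ) : Fin k → ℝ :=
  if h : M.IsHermitian then fun i => (h.eigenvalues ∘ Tuple.sort h.eigenvalues) i.rev
  else fun _ => 0

/-- DFact-feasibility of the tuple `(Θ, υ, ν, π, τ)` for the data `(A; F)`:
`Θ ≻ 0`, `υ, ν, π ≥ 0` and `diag(FΘFᵀ) + υ − ν − Aᵀπ − τ𝟙 = 0`. -/
def DFactFeasible {n m k : ℕ} (A : Matrix (Fin m) (Fin n) ℝ) (F : Matrix (Fin n) (Fin k) ℝ)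
    (Θ : Matrix (Fin k) (Fin k) ℝ) (υ ν : Fin n → ℝ) (π : Fin m → ℝ) (τ : ℝ) : Prop :=
  Θ.PosDef ∧ (∀ j, 0 ≤ υ j) ∧ (∀ j, 0 ≤ ν j) ∧ (∀ i, 0 ≤ π i) ∧
    ∀ j, (F * Θ * Fᵀ) j j + υ j - ν j - (∑ i, A i j * π i) - τ = 0

/-- The DFact objective value
`f(Θ, ν, π, τ) = −Σ_{ℓ=k−s+1}^{k} log λ_ℓ(Θ) + νᵀ𝟙 + πᵀb + τ·s − s`. -/
noncomputable def DFactObj {n m k : ℕ} (s : ℕ) (b : Fin m → ℝ)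
    (Θ : Matrix (Fin k) (Fin k) ℝ) (ν : Fin n → ℝ) (π : Fin m → ℝ) (τ : ℝ) : ℝ :=
  -(∑ i : Fin k, if k - s ≤ (i : ℕ) then Real.log (sortedEigs Θ i) else 0)
    + (∑ j, ν j) + (∑ i, π i * b i) + τ * s - s


/-- CMESP-feasibility of a binary vector `x`: `x ∈ {0,1}ⁿ`, `𝟙ᵀx = s` and `Ax ≤ b`. -/
def CMESPFeasible {n m : ℕ} (s : ℕ) (A : Matrix (Fin m) (Fin n) ℝ) (b : Fin m → ℝ)
    (x : Fin n → ℝ) : Prop :=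
  (∀ j, x j = 0 ∨ x j = 1) ∧ (∑ j, x j = (s : ℝ)) ∧ ∀ i, A.mulVec x i ≤ b i

/-- `det C[S(x), S(x)]`: the determinant of the principal submatrix of `C` whose rows and
columns are indexed by the support `S(x) = {j : x j = 1}` of a binary vector `x`. -/
noncomputable def suppDet {n : ℕ} (C : Matrix (Fin n) (Fin n) ℝ) (x : Fin n → ℝ) : ℝ :=
  haveI : DecidablePred (fun j : Fin n => x j = 1) := Classical.decPred _
  (C.submatrix (fun i : {j : Fin n // x j = 1} => (i : Fin n))
    (fun i : {j : Fin n // x j = 1} => (i : Fin n))).det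

section AuxCB
open Finset
variable {R : Type*} [CommRing R] {s k : ℕ}

theorem det_mul_expand (M : Matrix (Fin s) (Fin k) R) (N : Matrix (Fin k) (Fin s) R) :
    (M * N).det = ∑ g : Fin s → Fin k, (∏ i, M i (g i)) * (N.submatrix g id).det := by
  have h1 : (M * N) = Matrix.of (fun i => ∑ t, M i t • N t) := by
    ext i j; simp [Matrix.mul_apply, Finset.sum_apply]
  rw [h1]
  have : (Matrix.of (fun i => ∑ t, M i t • N t)).det
      = (Matrix.detRowAlternating (R := R) (n := Fin s)).toMultilinearMap
          (fun i => ∑ t, M i t • N t) := rfl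
  rw [this, MultilinearMap.map_sum]
  refine Finset.sum_congr rfl fun g _ => ?_
  rw [MultilinearMap.map_smul_univ]
  rfl


/-- the finset image of an injective tuple, with its cardinality -/
def imgSet {g : Fin s → Fin k} (hg : Function.Injective g) : {T : Finset (Fin k) // T.card = s} :=
  ⟨Finset.image g univ, by
    rw [Finset.card_image_of_injective _ hg, card_univ, Fintype.card_fin]⟩

noncomputable def imgPerm {g : Fin s → Fin k} (hg : Function.Injective g) :
    Equiv.Perm (Fin s) :=
  Equiv.ofBijective
    (fun i => ((imgSet hg).1.orderIsoOfFin (imgSet hg).2).symm ⟨g i, by simp [imgSet]⟩)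
    (Finite.injective_iff_bijective.1 (fun a b hab => hg (by
        have := congrArg (fun z => (((imgSet hg).1.orderIsoOfFin (imgSet hg).2) z : Fin k)) hab
        simpa using this)))

theorem imgPerm_spec {g : Fin s → Fin k} (hg : Function.Injective g) (i : Fin s) :
    (imgSet hg).1.orderEmbOfFin (imgSet hg).2 (imgPerm hg i) = g i := by
  have : ((imgSet hg).1.orderIsoOfFin (imgSet hg).2) (imgPerm hg i)
      = ⟨g i, by simp [imgSet]⟩ := by
    simp [imgPerm, Equiv.ofBijective_apply, Equiv.apply_symm_apply]
  have h2 := congrArg Subtype.val this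
  simpa [Finset.coe_orderIsoOfFin_apply] using h2

theorem sum_injective_eq_sum_pairs (t : (Fin s → Fin k) → R) :
    ∑ g ∈ univ.filter (fun g : Fin s → Fin k => Function.Injective g), t g
      = ∑ p : {T : Finset (Fin k) // T.card = s} × Equiv.Perm (Fin s),
          t (p.1.1.orderEmbOfFin p.1.2 ∘ p.2) := by
  classical
  refine Finset.sum_bij'
    (fun (g : Fin s → Fin k) (hg : g ∈ univ.filter fun g => Function.Injective g) =>
      ((imgSet (by simpa using hg), imgPerm (by simpa using hg)) :
        {T : Finset (Fin k) // T.card = s} × Equiv.Perm (Fin s)))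
    (fun p _ => (p.1.1.orderEmbOfFin p.1.2 ∘ p.2 : Fin s → Fin k))
    (fun g hg => Finset.mem_univ _)
    (fun p _ => by
      simp only [Finset.mem_filter, Finset.mem_univ, true_and]
      exact (p.1.1.orderEmbOfFin p.1.2).injective.comp p.2.injective)
    ?_ ?_ ?_
  · -- left inverse: j (i g) = g
    intro g hg
    funext i
    exact imgPerm_spec (by simpa using hg) i
  · -- right inverse: i (j p) = p
    intro p _
    set g : Fin s → Fin k := p.1.1.orderEmbOfFin p.1.2 ∘ p.2 with hgdef
    have hginj : Function.Injective g := (p.1.1.orderEmbOfFin p.1.2).injective.comp p.2.injective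
    have hI : imgSet hginj = p.1 := by
      apply Subtype.ext
      apply Finset.coe_injective
      simp only [imgSet, Finset.coe_image, Finset.coe_univ, Set.image_univ]
      rw [hgdef]
      rw [Set.range_comp, Equiv.range_eq_univ, Set.image_univ,
        Finset.range_orderEmbOfFin]
    have hemb : (imgSet hginj).1.orderEmbOfFin (imgSet hginj).2
        = p.1.1.orderEmbOfFin p.1.2 := by
      refine Finset.orderEmbOfFin_unique' _ (fun x => ?_)
      rw [← hI]
      exact Finset.orderEmbOfFin_mem _ _ x
    have hemb' : ∀ x, (imgSet hginj).1.orderEmbOfFin (imgSet hginj).2 x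
        = p.1.1.orderEmbOfFin p.1.2 x := fun x => by rw [hemb]
    have hP : imgPerm hginj = p.2 := by
      apply Equiv.ext
      intro i
      apply (p.1.1.orderEmbOfFin p.1.2).injective
      calc p.1.1.orderEmbOfFin p.1.2 (imgPerm hginj i)
          = (imgSet hginj).1.orderEmbOfFin (imgSet hginj).2 (imgPerm hginj i) :=
            (hemb' _).symm
        _ = g i := imgPerm_spec hginj i
        _ = p.1.1.orderEmbOfFin p.1.2 (p.2 i) := rfl
    have : (⟨imgSet hginj, imgPerm hginj⟩ :
        {T : Finset (Fin k) // T.card = s} × Equiv.Perm (Fin s)) = ⟨p.1, p.2⟩ := by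
      rw [hI, hP]
    simpa using this
  · intro g hg
    congr 1
    funext i
    exact (imgPerm_spec (by simpa using hg) i).symm

theorem cauchyBinet (M : Matrix (Fin s) (Fin k) R) (N : Matrix (Fin k) (Fin s) R) :
    (M * N).det = ∑ T : {T : Finset (Fin k) // T.card = s},
      (M.submatrix id (T.1.orderEmbOfFin T.2)).det * (N.submatrix (T.1.orderEmbOfFin T.2) id).det := by
  classical
  rw [det_mul_expand]
  rw [← Finset.sum_filter_of_ne (p := fun g : Fin s → Fin k => Function.Injective g)
    (fun g _ hne => by
      by_contra hni
      apply hne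
      simp only [Function.Injective, not_forall] at hni
      obtain ⟨a, b, hab, hne'⟩ := hni
      have : (N.submatrix g id).det = 0 :=
        Matrix.det_zero_of_row_eq hne' (by
          funext j; simp [Matrix.submatrix_apply, hab])
      rw [this, mul_zero])]
  rw [sum_injective_eq_sum_pairs]
  rw [Fintype.sum_prod_type]
  refine Finset.sum_congr rfl fun T _ => ?_
  have hsub : ∀ σ : Equiv.Perm (Fin s),
      (N.submatrix (⇑(T.1.orderEmbOfFin T.2) ∘ ⇑σ) id)
        = (N.submatrix (T.1.orderEmbOfFin T.2) id).submatrix σ id := by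
    intro σ; ext i j; simp [Matrix.submatrix_apply]
  calc ∑ σ : Equiv.Perm (Fin s),
      (∏ i, M i ((T.1.orderEmbOfFin T.2 ∘ σ) i)) *
        (N.submatrix (⇑(T.1.orderEmbOfFin T.2) ∘ ⇑σ) id).det
      = ∑ σ : Equiv.Perm (Fin s),
        ((Equiv.Perm.sign σ : ℤ) : R) * (∏ i, (M.submatrix id (T.1.orderEmbOfFin T.2))ᵀ (σ i) i) *
          (N.submatrix (T.1.orderEmbOfFin T.2) id).det := by
        refine Finset.sum_congr rfl fun σ _ => ?_
        rw [hsub σ, Matrix.det_permute]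
        have hprod : (∏ i, M i ((⇑(T.1.orderEmbOfFin T.2) ∘ ⇑σ) i))
            = ∏ i, (M.submatrix id (T.1.orderEmbOfFin T.2))ᵀ (σ i) i := rfl
        rw [hprod]
        push_cast
        ring
    _ = (∑ σ : Equiv.Perm (Fin s),
          ((Equiv.Perm.sign σ : ℤ) : R) * ∏ i, (M.submatrix id (T.1.orderEmbOfFin T.2))ᵀ (σ i) i) *
          (N.submatrix (T.1.orderEmbOfFin T.2) id).det := by rw [Finset.sum_mul]
    _ = (M.submatrix id (T.1.orderEmbOfFin T.2)).det * (N.submatrix (T.1.orderEmbOfFin T.2) id).det := by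
        rw [← Matrix.det_apply', Matrix.det_transpose]

theorem prod_fin_of_finset {α : Type*} [CommMonoid α] (d : Fin k → α) (T : Finset (Fin k))
    (hT : T.card = s) : ∏ t ∈ T, d t = ∏ i : Fin s, d (T.orderEmbOfFin hT i) := by
  classical
  have himg : T = Finset.image (T.orderEmbOfFin hT) univ := by
    apply Finset.coe_injective
    rw [Finset.coe_image, Finset.coe_univ, Set.image_univ, Finset.range_orderEmbOfFin]
  conv_lhs => rw [himg]
  rw [Finset.prod_image (fun a _ b _ hab => (T.orderEmbOfFin hT).injective hab)]

theorem cauchyBinet_diag (H : Matrix (Fin s) (Fin k) ℝ) (d : Fin k → ℝ) :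
    (H * Matrix.diagonal d * Hᵀ).det
      = ∑ T : {T : Finset (Fin k) // T.card = s},
          (∏ t ∈ T.1, d t) * ((H.submatrix id (T.1.orderEmbOfFin T.2)).det) ^ 2 := by
  classical
  rw [cauchyBinet]
  refine Finset.sum_congr rfl fun T _ => ?_
  have h1 : (H * Matrix.diagonal d).submatrix id (T.1.orderEmbOfFin T.2)
      = (H.submatrix id (T.1.orderEmbOfFin T.2)) * Matrix.diagonal (d ∘ (T.1.orderEmbOfFin T.2)) := by
    ext i j
    simp [Matrix.mul_apply, Matrix.diagonal, Matrix.submatrix_apply, Finset.mul_sum,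
      mul_ite, ite_and]
  have h2 : Hᵀ.submatrix (T.1.orderEmbOfFin T.2) id
      = (H.submatrix id (T.1.orderEmbOfFin T.2))ᵀ := by
    ext i j; simp [Matrix.submatrix_apply]
  rw [h1, h2, Matrix.det_mul, Matrix.det_diagonal, Matrix.det_transpose,
    prod_fin_of_finset d T.1 T.2]
  simp only [Function.comp_apply]
  ring

theorem strictMono_fin_le {f : Fin s → Fin k} (hf : StrictMono f) (i : Fin s) :
    (i : ℕ) ≤ (f i : ℕ) := by
  suffices h : ∀ v (hv : v < s), v ≤ (f ⟨v, hv⟩ : ℕ) by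
    have := h i.1 i.2; simpa using this
  intro v
  induction v with
  | zero => intro hv; exact Nat.zero_le _
  | succ w ih =>
    intro hv
    have hw : w < s := Nat.lt_of_succ_lt hv
    have hlt : f ⟨w, hw⟩ < f ⟨w + 1, hv⟩ := hf (by simp [Fin.lt_def])
    have := ih hw
    rw [Fin.lt_def] at hlt
    omega

theorem prod_smallest_le (hsk : s ≤ k) (v : Fin k → ℝ) (hv : Monotone v)
    (h0 : ∀ i, 0 ≤ v i) (T : Finset (Fin k)) (hT : T.card = s) :
    ∏ i : Fin s, v (Fin.castLE hsk i) ≤ ∏ t ∈ T, v t := by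
  rw [prod_fin_of_finset v T hT]
  refine Finset.prod_le_prod (fun i _ => h0 _) (fun i _ => ?_)
  refine hv ?_
  have := strictMono_fin_le (T.orderEmbOfFin hT).strictMono i
  exact Fin.le_def.2 (by simpa using this)

theorem det_le_exp_trace {p : ℕ} {S : Matrix (Fin p) (Fin p) ℝ} (hS : S.PosSemidef) :
    S.det ≤ Real.exp (S.trace - p) := by
  classical
  have hH : S.IsHermitian := hS.1
  have htr : S.trace = ∑ i, hH.eigenvalues i := by
    nth_rewrite 1 [hH.spectral_theorem]
    rw [Unitary.conjStarAlgAut_apply]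
    rw [Matrix.trace_mul_cycle]
    have : (star (hH.eigenvectorUnitary : Matrix (Fin p) (Fin p) ℝ)) *
        (hH.eigenvectorUnitary : Matrix (Fin p) (Fin p) ℝ) = 1 :=
      Unitary.coe_star_mul_self _
    rw [this, Matrix.one_mul, Matrix.trace_diagonal]
    simp
  have hdet : S.det = ∏ i, hH.eigenvalues i := by
    rw [hH.det_eq_prod_eigenvalues]; norm_num
  rw [hdet, htr]
  calc ∏ i, hH.eigenvalues i ≤ ∏ i, Real.exp (hH.eigenvalues i - 1) := by
        refine Finset.prod_le_prod (fun i _ => hS.eigenvalues_nonneg i) (fun i _ => ?_)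
        have := Real.add_one_le_exp (hH.eigenvalues i - 1)
        linarith
    _ = Real.exp (∑ i, (hH.eigenvalues i - 1)) := by rw [Real.exp_sum]
    _ = Real.exp ((∑ i, hH.eigenvalues i) - p) := by
        rw [Finset.sum_sub_distrib]
        simp

theorem prod_sorted_smallest_le (hsk : s ≤ k) (w : Fin k → ℝ) (h0 : ∀ i, 0 ≤ w i)
    (T : Finset (Fin k)) (hT : T.card = s) :
    ∏ i : Fin s, (w ∘ Tuple.sort w) (Fin.castLE hsk i) ≤ ∏ t ∈ T, w t := by
  classical
  have hmono := Tuple.monotone_sort w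
  have himg : ∏ t ∈ T.image (Tuple.sort w).symm, (w ∘ Tuple.sort w) t = ∏ t ∈ T, w t := by
    rw [Finset.prod_image (fun a _ b _ hab => (Tuple.sort w).symm.injective hab)]
    simp
  rw [← himg]
  exact prod_smallest_le hsk (w ∘ Tuple.sort w) hmono (fun i => h0 _) _
    (by rw [Finset.card_image_of_injective _ (Tuple.sort w).symm.injective, hT])

theorem core_det_ineq (hsk : s ≤ k) {Θ : Matrix (Fin k) (Fin k) ℝ} (hΘ : Θ.PosDef)
    (G : Matrix (Fin s) (Fin k) ℝ) :
    (G * Gᵀ).det *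
        ∏ i : Fin s, (hΘ.1.eigenvalues ∘ Tuple.sort hΘ.1.eigenvalues) (Fin.castLE hsk i)
      ≤ (G * Θ * Gᵀ).det := by
  classical
  set hH : Θ.IsHermitian := hΘ.1 with hHdef
  set U : Matrix (Fin k) (Fin k) ℝ := (hH.eigenvectorUnitary : Matrix (Fin k) (Fin k) ℝ) with hU
  set eig : Fin k → ℝ := hH.eigenvalues
  set H : Matrix (Fin s) (Fin k) ℝ := G * U with hHH
  have hstar : star U = Uᵀ := by
    ext i j; simp [Matrix.star_apply]
  have hspec : Θ = U * Matrix.diagonal eig * Uᵀ := by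
    rw [← hstar]
    have := hH.spectral_theorem
    rw [Unitary.conjStarAlgAut_apply] at this
    exact this
  have h1 : G * Θ * Gᵀ = H * Matrix.diagonal eig * Hᵀ := by
    rw [hspec, hHH, Matrix.transpose_mul]
    simp only [Matrix.mul_assoc]
  have h2 : G * Gᵀ = H * Hᵀ := by
    have hUU : U * Uᵀ = 1 := by
      rw [← hstar]
      exact Unitary.coe_mul_star_self _
    rw [hHH, Matrix.transpose_mul]
    calc G * Gᵀ = G * ((U * Uᵀ) * Gᵀ) := by rw [hUU, Matrix.one_mul]
      _ = G * U * (Uᵀ * Gᵀ) := by simp only [Matrix.mul_assoc]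
  have h3 : H * Hᵀ = H * Matrix.diagonal (fun _ : Fin k => (1:ℝ)) * Hᵀ := by
    rw [Matrix.diagonal_one, Matrix.mul_one]
  rw [h1, h2, h3, cauchyBinet_diag, cauchyBinet_diag, Finset.sum_mul]
  refine Finset.sum_le_sum fun T _ => ?_
  have hnn : ∀ i, 0 ≤ eig i := fun i => hΘ.posSemidef.eigenvalues_nonneg i
  have hple := prod_sorted_smallest_le hsk eig hnn T.1 T.2
  have hsq : (0:ℝ) ≤ ((H.submatrix id (T.1.orderEmbOfFin T.2)).det) ^ 2 := sq_nonneg _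
  have := mul_le_mul_of_nonneg_right hple hsq
  simp only [Finset.prod_const_one, one_mul]
  linarith

theorem sum_rev_filter (hsk : s ≤ k) (w : Fin k → ℝ) :
    ∑ i : Fin k, (if k - s ≤ (i : ℕ) then w i.rev else 0)
      = ∑ j : Fin s, w (Fin.castLE hsk j) := by
  classical
  have step1 : ∑ i : Fin k, (if k - s ≤ (i : ℕ) then w i.rev else 0)
      = ∑ j : Fin k, (if ((j : ℕ) : ℕ) < s then w j else 0) := by
    rw [← Equiv.sum_comp (Fin.revPerm)
      (fun i : Fin k => if k - s ≤ (i : ℕ) then w i.rev else 0)]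
    refine Finset.sum_congr rfl fun j _ => ?_
    have hval : ((Fin.revPerm j : Fin k) : ℕ) = k - 1 - (j : ℕ) := by
      simp [Fin.revPerm, Fin.val_rev]; omega
    have hcond : (k - s ≤ ((Fin.revPerm j : Fin k) : ℕ)) ↔ ((j : ℕ) < s) := by
      rw [hval]
      have := j.2
      omega
    by_cases hc : (j : ℕ) < s
    · rw [if_pos (hcond.2 hc), if_pos hc]
      congr 1
      simp [Fin.revPerm, Fin.rev_rev]
    · rw [if_neg (fun h => hc (hcond.1 h)), if_neg hc]
  rw [step1, ← Finset.sum_filter]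
  refine Finset.sum_bij'
    (fun (j : Fin k) (hj : j ∈ Finset.univ.filter fun j : Fin k => (j : ℕ) < s) =>
      (⟨(j : ℕ), by simpa using hj⟩ : Fin s))
    (fun (j : Fin s) _ => Fin.castLE hsk j) (fun j hj => Finset.mem_univ _)
    (fun j _ => by simp) (fun j hj => by apply Fin.ext; rfl)
    (fun j _ => by apply Fin.ext; rfl) (fun j hj => by congr 1)

theorem key_bound {n m : ℕ} (hs : 0 < s) (hsk : s ≤ k)
    (C : Matrix (Fin n) (Fin n) ℝ)
    (F : Matrix (Fin n) (Fin k) ℝ) (hCF : C = F * Fᵀ)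
    (A : Matrix (Fin m) (Fin n) ℝ) (b : Fin m → ℝ)
    (Θ : Matrix (Fin k) (Fin k) ℝ) (υ ν : Fin n → ℝ) (π : Fin m → ℝ) (τ : ℝ)
    (hfeas : DFactFeasible A F Θ υ ν π τ)
    (x : Fin n → ℝ) (hx : CMESPFeasible s A b x) (u : ℝ)
    (hcase : (∑ j', x j' * ν j') - (∑ j', x j' * υ j') ≤ (∑ j', ν j') - u) :
    suppDet C x ≤ Real.exp (DFactObj s b Θ ν π τ - u) := by
  classical
  obtain ⟨hΘ, hυ, hν, hπ, heq⟩ := hfeas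
  obtain ⟨hbin, hsum, hAx⟩ := hx
  set S : Finset (Fin n) := Finset.univ.filter (fun j => x j = 1) with hSdef
  have hmemS : ∀ j, j ∈ S ↔ x j = 1 := fun j => by simp [hSdef]
  have hcard : S.card = s := by
    have h1 : (∑ j, x j) = ∑ j, (if x j = 1 then (1:ℝ) else 0) := by
      refine Finset.sum_congr rfl fun j _ => ?_
      rcases hbin j with h | h <;> norm_num [h]
    rw [h1, Finset.sum_boole] at hsum
    exact_mod_cast hsum
  have hcard' : Fintype.card {j : Fin n // x j = 1} = s := by
    rw [Fintype.card_subtype]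
    exact hcard
  let e : {j : Fin n // x j = 1} ≃ Fin s := Fintype.equivFinOfCardEq hcard'
  let c : Fin s → Fin n := fun a => (e.symm a).val
  set G : Matrix (Fin s) (Fin k) ℝ := F.submatrix c id with hGdef
  -- suppDet = det (G Gᵀ)
  have hdet : suppDet C x = (G * Gᵀ).det := by
    rw [suppDet]
    rw [← Matrix.det_submatrix_equiv_self e.symm, Matrix.submatrix_submatrix]
    congr 1
    ext a b'
    simp [hCF, Matrix.mul_apply, hGdef, Matrix.submatrix_apply, c, Function.comp]
  -- sums over the support
  have hsubsum : ∀ w : Fin n → ℝ, ∑ a : Fin s, w (c a) = ∑ j', x j' * w j' := by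
    intro w
    have h1 : ∑ a : Fin s, w (c a) = ∑ b' : {j : Fin n // x j = 1}, w b'.val :=
      Equiv.sum_comp e.symm (fun b' => w b'.val)
    have h2 : ∑ j' ∈ S, w j' = ∑ b' : {j : Fin n // x j = 1}, w b'.val :=
      Finset.sum_subtype S hmemS w
    have h3 : ∑ j' ∈ S, w j' = ∑ j', x j' * w j' := by
      rw [hSdef, Finset.sum_filter]
      refine Finset.sum_congr rfl fun j' _ => ?_
      rcases hbin j' with h | h <;> simp [h]
    rw [h1, ← h2, h3]
  -- trace identity
  have htrace : (G * Θ * Gᵀ).trace = ∑ j', x j' * ((F * Θ * Fᵀ) j' j') := by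
    rw [← hsubsum (fun j' => (F * Θ * Fᵀ) j' j')]
    rw [Matrix.trace]
    refine Finset.sum_congr rfl fun a _ => ?_
    simp [Matrix.diag, hGdef, Matrix.mul_apply, Matrix.submatrix_apply,
      Finset.sum_mul, Finset.mul_sum]
  -- trace bound
  have hdiag : ∀ j', (F * Θ * Fᵀ) j' j' = ν j' - υ j' + (∑ i, A i j' * π i) + τ := by
    intro j'; have := heq j'; linarith
  have hxnn : ∀ j', 0 ≤ x j' := fun j' => by rcases hbin j' with h | h <;> simp [h]
  have hArow : ∀ i, ∑ j', x j' * A i j' = A.mulVec x i := by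
    intro i
    rw [Matrix.mulVec, dotProduct]
    exact Finset.sum_congr rfl fun j' _ => mul_comm _ _
  have htau : ∑ j', x j' * τ = τ * s := by
    rw [← Finset.sum_mul, hsum]; ring
  have htrace_le : (G * Θ * Gᵀ).trace ≤ (∑ j', ν j') - u + (∑ i, π i * b i) + τ * s := by
    rw [htrace]
    have hexp : ∑ j', x j' * ((F * Θ * Fᵀ) j' j')
        = (∑ j', x j' * ν j') - (∑ j', x j' * υ j')
          + (∑ j', x j' * (∑ i, A i j' * π i)) + τ * s := by
      rw [← htau, ← Finset.sum_sub_distrib, ← Finset.sum_add_distrib,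
        ← Finset.sum_add_distrib]
      refine Finset.sum_congr rfl fun j' _ => ?_
      rw [hdiag j']; ring
    rw [hexp]
    have hA_le : (∑ j', x j' * (∑ i, A i j' * π i)) ≤ ∑ i, π i * b i := by
      have hswap : (∑ j', x j' * (∑ i, A i j' * π i)) = ∑ i, π i * (A.mulVec x i) := by
        calc (∑ j', x j' * (∑ i, A i j' * π i))
            = ∑ j', ∑ i, x j' * (A i j' * π i) := by simp_rw [Finset.mul_sum]
          _ = ∑ i, ∑ j', x j' * (A i j' * π i) := Finset.sum_comm
          _ = ∑ i, π i * (A.mulVec x i) := by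
              refine Finset.sum_congr rfl fun i _ => ?_
              rw [← hArow i, Finset.mul_sum]
              exact Finset.sum_congr rfl fun j' _ => by ring
      rw [hswap]
      exact Finset.sum_le_sum fun i _ => mul_le_mul_of_nonneg_left (hAx i) (hπ i)
    linarith
  -- spectral quantities
  set v : Fin k → ℝ := hΘ.1.eigenvalues ∘ Tuple.sort hΘ.1.eigenvalues with hvdef
  set P : ℝ := ∏ i : Fin s, v (Fin.castLE hsk i) with hPdef
  have hvpos : ∀ i, 0 < v i := fun i => hΘ.eigenvalues_pos _
  have hPpos : 0 < P := Finset.prod_pos fun i _ => hvpos _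
  have hPSD : (G * Θ * Gᵀ).PosSemidef := by
    have h := hΘ.posSemidef.mul_mul_conjTranspose_same G
    have hGH : Gᴴ = Gᵀ := by ext i j; simp [Matrix.conjTranspose_apply]
    rwa [hGH] at h
  have hcore := core_det_ineq hsk hΘ G
  have hexp1 : (G * Θ * Gᵀ).det ≤ Real.exp ((G * Θ * Gᵀ).trace - s) := det_le_exp_trace hPSD
  have hobj : (∑ i : Fin k, if k - s ≤ (i : ℕ) then Real.log (sortedEigs Θ i) else 0)
      = Real.log P := by
    have hsort : sortedEigs Θ = fun i => v i.rev := by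
      rw [sortedEigs, dif_pos hΘ.1]
    rw [hsort, hPdef]
    rw [sum_rev_filter hsk (fun i => Real.log (v i))]
    rw [Real.log_prod (fun i _ => ne_of_gt (hvpos _))]
  have hfinal : (G * Gᵀ).det ≤ Real.exp (DFactObj s b Θ ν π τ - u) := by
    have hDO : DFactObj s b Θ ν π τ - u
        = ((∑ j', ν j') - u + (∑ i, π i * b i) + τ * s - s) - Real.log P := by
      rw [DFactObj, hobj]; ring
    rw [hDO, Real.exp_sub, Real.exp_log hPpos, le_div_iff₀ hPpos]
    calc (G * Gᵀ).det * P ≤ (G * Θ * Gᵀ).det := hcore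
      _ ≤ Real.exp ((G * Θ * Gᵀ).trace - s) := hexp1
      _ ≤ Real.exp ((∑ j', ν j') - u + (∑ i, π i * b i) + τ * s - s) := by
          apply Real.exp_le_exp.2
          linarith
  rw [hdet]
  exact hfinal


end AuxCB

theorem stmt_5 {n m s k : ℕ} (hn : 0 < n) (hm : 0 < m) (hs : 0 < s) (hsk : s ≤ k)
    (C : Matrix (Fin n) (Fin n) ℝ) (hC : C.PosSemidef)
    (F : Matrix (Fin n) (Fin k) ℝ) (hCF : C = F * Fᵀ)
    (A : Matrix (Fin m) (Fin n) ℝ) (b : Fin m → ℝ)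
    (Θ : Matrix (Fin k) (Fin k) ℝ) (υ ν : Fin n → ℝ) (π : Fin m → ℝ) (τ : ℝ)
    (hfeas : DFactFeasible A F Θ υ ν π τ)
    (j : Fin n) :
    -- (i): every CMESP-feasible binary x with x_j = 1 satisfies det C[S(x),S(x)] ≤ exp(ζ̂ − υ̂_j)
    (∀ x : Fin n → ℝ, CMESPFeasible s A b x → x j = 1 →
        suppDet C x ≤ Real.exp (DFactObj s b Θ ν π τ - υ j)) ∧
    -- (ii): every CMESP-feasible binary x with x_j = 0 satisfies det C[S(x),S(x)] ≤ exp(ζ̂ − ν̂_j)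
    (∀ x : Fin n → ℝ, CMESPFeasible s A b x → x j = 0 →
        suppDet C x ≤ Real.exp (DFactObj s b Θ ν π τ - ν j)) := by
  obtain ⟨hΘ, hυ, hν, hπ, heq⟩ := hfeas
  have hfeas' : DFactFeasible A F Θ υ ν π τ := ⟨hΘ, hυ, hν, hπ, heq⟩
  constructor
  · intro x hx hxj
    have hxnn : ∀ j', 0 ≤ x j' := fun j' => by rcases hx.1 j' with h | h <;> simp [h]
    refine key_bound hs hsk C F hCF A b Θ υ ν π τ hfeas' x hx (υ j) ?_
    have h1 : ∑ j', x j' * ν j' ≤ ∑ j', ν j' := by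
      refine Finset.sum_le_sum fun j' _ => ?_
      rcases hx.1 j' with h | h <;> simp [h, hν j']
    have h2 : υ j ≤ ∑ j', x j' * υ j' := by
      have := Finset.single_le_sum (f := fun j' => x j' * υ j')
        (fun j' _ => mul_nonneg (hxnn j') (hυ j')) (Finset.mem_univ j)
      simp only [hxj, one_mul] at this
      exact this
    linarith
  · intro x hx hxj
    have hxnn : ∀ j', 0 ≤ x j' := fun j' => by rcases hx.1 j' with h | h <;> simp [h]
    refine key_bound hs hsk C F hCF A b Θ υ ν π τ hfeas' x hx (ν j) ?_
    have h2 : 0 ≤ ∑ j', x j' * υ j' :=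
      Finset.sum_nonneg fun j' _ => mul_nonneg (hxnn j') (hυ j')
    have h1 : (∑ j', x j' * ν j') + ν j ≤ ∑ j', ν j' := by
      classical
      have hsplit : ∑ j', x j' * ν j'
          = ∑ j' ∈ Finset.univ.erase j, x j' * ν j' + x j * ν j :=
        (Finset.sum_erase_add _ _ (Finset.mem_univ j)).symm
      have hsplit2 : ∑ j', ν j' = ∑ j' ∈ Finset.univ.erase j, ν j' + ν j :=
        (Finset.sum_erase_add _ _ (Finset.mem_univ j)).symm
      have hle : ∑ j' ∈ Finset.univ.erase j, x j' * ν j'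
          ≤ ∑ j' ∈ Finset.univ.erase j, ν j' := by
        refine Finset.sum_le_sum fun j' _ => ?_
        rcases hx.1 j' with h | h <;> simp [h, hν j']
      rw [hsplit, hsplit2, hxj]
      simp only [zero_mul, add_zero]
      linarith
    linarith
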